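/- Let (Σ,σ) be a primitive Markov subshift on a countable alphabet and let A : Σ → ℝ be a bounded above, locally Hölder continuous potential (with constant H_A) satisfying inf A|_{⋃_{i∈F}[i]} > −∞. Then the function u_A(x) = sup{S_k(A − β_A)(y) : k ≥ 0, y ∈ Σ, σ^k(y) = x} is locally Hölder continuous with Var_k(u_A) ≤ (H_A/(1−λ)) λ^k for all k ≥ 1. -/

import Mathlib

open MeasureTheory Filter Topology Set

/-- Membership in the Markov shift: admissible transitions at every coordinate. -/
def InShift (M : ℕ → ℕ → Bool) (x : ℕ → ℕ) : Prop := ∀ j, M (x j) (x (j+1)) = true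

/-- The one-sided countable Markov shift `Σ` associated to the transition matrix `M`,
as a subtype of `ℕ → ℕ` (with the product topology, which is the topology induced by
the metric `d(x,y) = λ^{min{j : x_j ≠ y_j}}`). -/
abbrev ShiftSpace (M : ℕ → ℕ → Bool) := {x : ℕ → ℕ // InShift M x}

/-- The left shift map `σ`. -/
def shiftMap (M : ℕ → ℕ → Bool) (x : ShiftSpace M) : ShiftSpace M :=
  ⟨fun j => x.1 (j+1), fun j => x.2 (j+1)⟩

/-- `Agree M k x y` means the points `x, y` coincide on the first `k` coordinates;
for `k ≥ 1` this is exactly `d(x,y) ≤ λ^k` for the metric of the paper. -/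
def Agree (M : ℕ → ℕ → Bool) (k : ℕ) (x y : ShiftSpace M) : Prop :=
  ∀ j < k, x.1 j = y.1 j

/-- The sets `B_n` of symbols admitting admissible words of length `n+1` starting at them. -/
def BSet (M : ℕ → ℕ → Bool) : ℕ → Set ℕ
  | 0 => {i | ∃ j, M i j = true}
  | n+1 => {i | ∃ j ∈ BSet M n, M i j = true}

/-- `⋂_{n ≥ 0} B_n`. -/
def BInf (M : ℕ → ℕ → Bool) : Set ℕ := ⋂ n, BSet M n

/-- `M` is primitive with connecting set `F` and connection length `K₀`: any two symbols
of `⋂ B_n` can be joined by an admissible word of length `K₀` with all letters in `F`. -/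
def Primitive (M : ℕ → ℕ → Bool) (F : Set ℕ) (K₀ : ℕ) : Prop :=
  ∀ i ∈ BInf M, ∀ j ∈ BInf M, ∃ p : ℕ → ℕ,
    p 0 = i ∧ p (K₀ + 1) = j ∧ (∀ t, 1 ≤ t → t ≤ K₀ → p t ∈ F) ∧
    (∀ t ≤ K₀, M (p t) (p (t+1)) = true)

/-- `A` is locally Hölder continuous with constant `H`:
`Var_k(A) ≤ H ⬝ λ^k` for every `k ≥ 1`. -/
def LocHolder (M : ℕ → ℕ → Bool) (lam H : ℝ) (A : ShiftSpace M → ℝ) : Prop :=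
  ∀ k : ℕ, 1 ≤ k → ∀ x y : ShiftSpace M, Agree M k x y → A x - A y ≤ H * lam ^ k

/-- `A` is coercive: `sup A|_{[i]} → -∞` as `i → ∞`. -/
def Coercive (M : ℕ → ℕ → Bool) (A : ShiftSpace M → ℝ) : Prop :=
  ∀ C : ℝ, ∃ N : ℕ, ∀ i : ℕ, N ≤ i → ∀ x : ShiftSpace M, x.1 0 = i → A x ≤ C

/-- The union of cylinders `⋃_{i ∈ F} [i]`. -/
def FCyl (M : ℕ → ℕ → Bool) (F : Set ℕ) : Set (ShiftSpace M) := {x | x.1 0 ∈ F}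

/-- `μ` is a `σ`-invariant Borel probability measure. -/
def InvProb (M : ℕ → ℕ → Bool) (μ : Measure (ShiftSpace M)) : Prop :=
  IsProbabilityMeasure μ ∧ μ.map (shiftMap M) = μ

/-- The ergodic maximizing value `β_A = sup {∫ A dμ : μ ∈ M_σ}`. -/
noncomputable def betaA (M : ℕ → ℕ → Bool) (A : ShiftSpace M → ℝ) : ℝ :=
  sSup {r | ∃ μ : Measure (ShiftSpace M), InvProb M μ ∧ Integrable A μ ∧ ∫ x, A x ∂μ = r}

/-- The compact subshift `Σ_I` on the finite alphabet `{0, …, I}`. -/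
def SpaceI (M : ℕ → ℕ → Bool) (I : ℕ) : Set (ShiftSpace M) := {x | ∀ j, x.1 j ≤ I}

/-- `β_A(I) = max {∫ A dμ : μ ∈ M_σ, supp μ ⊆ Σ_I}`. -/
noncomputable def betaAI (M : ℕ → ℕ → Bool) (A : ShiftSpace M → ℝ) (I : ℕ) : ℝ :=
  sSup {r | ∃ μ : Measure (ShiftSpace M), InvProb M μ ∧ μ (SpaceI M I) = 1 ∧
    Integrable A μ ∧ ∫ x, A x ∂μ = r}

/-- Birkhoff sum `S_k A`. -/
noncomputable def birkhoff (M : ℕ → ℕ → Bool) (A : ShiftSpace M → ℝ) (k : ℕ)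
    (x : ShiftSpace M) : ℝ :=
  ∑ j ∈ Finset.range k, A ((shiftMap M)^[j] x)

/-- The `k`-th variation `Var_k(A)`. -/
noncomputable def VarK (M : ℕ → ℕ → Bool) (A : ShiftSpace M → ℝ) (k : ℕ) : ℝ :=
  sSup {r | ∃ x y : ShiftSpace M, Agree M k x y ∧ A x - A y = r}

/-- `Var(A) = ∑_{k ≥ 1} Var_k(A)`. -/
noncomputable def VarSum (M : ℕ → ℕ → Bool) (A : ShiftSpace M → ℝ) : ℝ :=
  ∑' k : ℕ, VarK M A (k + 1)

/-- `sup A`. -/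
noncomputable def supA (M : ℕ → ℕ → Bool) (A : ShiftSpace M → ℝ) : ℝ :=
  sSup (Set.range A)

/-- `inf A|_{⋃_{i ∈ F} [i]}`. -/
noncomputable def infF (M : ℕ → ℕ → Bool) (F : Set ℕ) (A : ShiftSpace M → ℝ) : ℝ :=
  sInf (A '' FCyl M F)

/-- The defining set for `u_A(x)`: all values `S_k(A - β_A)(y)` with `σ^k(y) = x`. -/
noncomputable def uASet (M : ℕ → ℕ → Bool) (A : ShiftSpace M → ℝ) (x : ShiftSpace M) :
    Set ℝ :=
  {r | ∃ (k : ℕ) (y : ShiftSpace M), (shiftMap M)^[k] y = x ∧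
    birkhoff M A k y - k * betaA M A = r}

/-- The candidate minimal sub-action
`u_A(x) = sup {S_k(A - β_A)(y) : k ≥ 0, σ^k(y) = x}`. -/
noncomputable def uA (M : ℕ → ℕ → Bool) (A : ShiftSpace M → ℝ) (x : ShiftSpace M) : ℝ :=
  sSup (uASet M A x)

/-- The non-wandering set `Ω(A, I)` with respect to `A|_{Σ_I}`. -/
def NonWandering (M : ℕ → ℕ → Bool) (A : ShiftSpace M → ℝ) (I : ℕ) :
    Set (ShiftSpace M) :=
  {x | x ∈ SpaceI M I ∧ ∀ ε : ℝ, 0 < ε → ∀ m : ℕ,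
    ∃ y ∈ SpaceI M I, ∃ n : ℕ, 1 ≤ n ∧ Agree M m x y ∧
      Agree M m x ((shiftMap M)^[n] y) ∧
      |birkhoff M A n y - n * betaAI M A I| < ε}

/-!
Fix `x, y` agreeing on their first `k ≥ 1` symbols and a preimage `w` of `x` under `σ^m`.
Keeping the first `m` symbols of `w` and continuing with `y` gives a preimage `z` of `y`
(admissible because `w_m = x_0 = y_0`) that agrees with `w` on `m + k` symbols, so by Hölder
continuity `S_m A(w) - S_m A(z) ≤ H (λ^{k+1} + ⋯ + λ^{k+m}) ≤ H λ^k / (1 - λ)`. Every element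
of the set defining `u_A(x)` is therefore matched by one for `u_A(y)` up to `H λ^k / (1 - λ)`,
and the bound passes to the suprema.
-/

section Agree

variable {M : ℕ → ℕ → Bool}

lemma Agree.symm {k : ℕ} {x y : ShiftSpace M} (h : Agree M k x y) : Agree M k y x :=
  fun j hj => (h j hj).symm

lemma Agree.shiftMap {n : ℕ} {x y : ShiftSpace M} (h : Agree M (n + 1) x y) :
    Agree M n (shiftMap M x) (shiftMap M y) :=
  fun j hj => h (j + 1) (by omega)

end Agree

namespace ShiftSpace

variable {M : ℕ → ℕ → Bool}

lemma shiftMap_iterate_apply (m : ℕ) (w : ShiftSpace M) (j : ℕ) :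
    ((shiftMap M)^[m] w).1 j = w.1 (j + m) := by
  induction m generalizing w with
  | zero => rfl
  | succ m ih => rw [Function.iterate_succ_apply, ih]; rfl

def splice (m : ℕ) (w y : ShiftSpace M) (h : w.1 m = y.1 0) : ShiftSpace M :=
  ⟨fun j => if j < m then w.1 j else y.1 (j - m), by
    intro j
    rcases lt_trichotomy (j + 1) m with hj | hj | hj
    · simpa [hj, show j < m by omega] using w.2 j
    · simpa [show j < m by omega, hj, ← h] using w.2 j
    · simpa [show ¬ j < m by omega, show ¬ j + 1 < m by omega,
        show j + 1 - m = j - m + 1 by omega] using y.2 (j - m)⟩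

lemma shiftMap_iterate_splice (m : ℕ) (w y : ShiftSpace M) (h : w.1 m = y.1 0) :
    (shiftMap M)^[m] (splice m w y h) = y := by
  ext j
  simp [shiftMap_iterate_apply, splice]

lemma agree_splice {m k : ℕ} {w y : ShiftSpace M} (h : w.1 m = y.1 0)
    (hwy : Agree M k ((shiftMap M)^[m] w) y) : Agree M (m + k) w (splice m w y h) := by
  intro j hj
  by_cases hjm : j < m
  · simp [splice, hjm]
  · have := hwy (j - m) (by omega)
    rw [shiftMap_iterate_apply, Nat.sub_add_cancel (by omega)] at this
    simpa [splice, hjm]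

end ShiftSpace

open ShiftSpace

section Holder

variable {M : ℕ → ℕ → Bool} {lam H : ℝ} {A : ShiftSpace M → ℝ}

lemma LocHolder.nonneg (hA : LocHolder M lam H A) (hlam₀ : 0 < lam) (x : ShiftSpace M) :
    0 ≤ H := by
  have := hA 1 le_rfl x x fun _ _ => rfl
  rw [sub_self, pow_one] at this
  exact nonneg_of_mul_nonneg_left this hlam₀

lemma birkhoff_succ (n : ℕ) (x : ShiftSpace M) :
    birkhoff M A (n + 1) x = A x + birkhoff M A n (shiftMap M x) := by
  simp only [birkhoff, Finset.sum_range_succ', Function.iterate_succ_apply,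
    Function.iterate_zero_apply]
  ring

lemma LocHolder.birkhoff_sub_le_sum (hA : LocHolder M lam H A) (n k : ℕ) {x z : ShiftSpace M}
    (hxz : Agree M (n + k) x z) :
    birkhoff M A n x - birkhoff M A n z ≤ H * ∑ i ∈ Finset.Ico (k + 1) (n + k + 1), lam ^ i := by
  induction n generalizing x z with
  | zero => simp [birkhoff]
  | succ n ih =>
    have hhead := hA (n + k + 1) (by omega) x z (by rwa [add_right_comm] at hxz)
    have htail := ih (Agree.shiftMap (by rwa [add_right_comm] at hxz))
    rw [birkhoff_succ, birkhoff_succ, show n + 1 + k + 1 = n + k + 1 + 1 by omega,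
      Finset.sum_Ico_succ_top (by omega), mul_add]
    linarith

lemma LocHolder.birkhoff_sub_le (hA : LocHolder M lam H A) (hlam₀ : 0 < lam) (hlam₁ : lam < 1)
    (hH : 0 ≤ H) (n k : ℕ) {x z : ShiftSpace M} (hxz : Agree M (n + k) x z) :
    birkhoff M A n x - birkhoff M A n z ≤ H / (1 - lam) * lam ^ k :=
  calc birkhoff M A n x - birkhoff M A n z
      ≤ H * ∑ i ∈ Finset.Ico (k + 1) (n + k + 1), lam ^ i := hA.birkhoff_sub_le_sum n k hxz
    _ ≤ H * (lam ^ (k + 1) / (1 - lam)) :=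
      mul_le_mul_of_nonneg_left (geom_sum_Ico_le_of_lt_one hlam₀.le hlam₁) hH
    _ ≤ H * (lam ^ k / (1 - lam)) := by
      have := pow_le_pow_of_le_one hlam₀.le hlam₁.le (Nat.le_succ k)
      gcongr ?_ * (?_ / _)
    _ = H / (1 - lam) * lam ^ k := by ring

end Holder

lemma zero_mem_uASet (M : ℕ → ℕ → Bool) (A : ShiftSpace M → ℝ) (x : ShiftSpace M) :
    (0 : ℝ) ∈ uASet M A x :=
  ⟨0, x, rfl, by simp [birkhoff]⟩

lemma LocHolder.exists_uASet_le_add {M : ℕ → ℕ → Bool} {lam H : ℝ} {A : ShiftSpace M → ℝ}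
    (hA : LocHolder M lam H A) (hlam₀ : 0 < lam) (hlam₁ : lam < 1) (hH : 0 ≤ H)
    {k : ℕ} (hk : 1 ≤ k) {x y : ShiftSpace M} (hxy : Agree M k x y) :
    ∀ r ∈ uASet M A x, ∃ r' ∈ uASet M A y, r ≤ r' + H / (1 - lam) * lam ^ k := by
  rintro _ ⟨m, w, rfl, rfl⟩
  have hwy : w.1 m = y.1 0 := by
    simpa [shiftMap_iterate_apply] using hxy 0 hk
  refine ⟨_, ⟨m, splice m w y hwy, shiftMap_iterate_splice m w y hwy, rfl⟩, ?_⟩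
  linarith [hA.birkhoff_sub_le hlam₀ hlam₁ hH m k (agree_splice hwy hxy)]

/-- `Real.sSup` of a set that is not bounded above is `0`, so the unbounded case needs
the matching in both directions. -/
lemma Real.sSup_sub_sSup_le_of_forall_exists_le_add {S T : Set ℝ} {c : ℝ} (hS : S.Nonempty)
    (hc : 0 ≤ c) (hST : ∀ r ∈ S, ∃ r' ∈ T, r ≤ r' + c) (hTS : ∀ r ∈ T, ∃ r' ∈ S, r ≤ r' + c) :
    sSup S - sSup T ≤ c := by
  by_cases hT : BddAbove T
  · suffices sSup S ≤ sSup T + c by linarith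
    refine csSup_le hS fun r hr => ?_
    obtain ⟨r', hr', hle⟩ := hST r hr
    linarith [le_csSup hT hr']
  · have hS' : ¬ BddAbove S := by
      rintro ⟨b, hb⟩
      refine hT ⟨b + c, fun r hr => ?_⟩
      obtain ⟨r', hr', hle⟩ := hTS r hr
      linarith [hb hr']
    rw [Real.sSup_of_not_bddAbove hS', Real.sSup_of_not_bddAbove hT, sub_self]
    exact hc

theorem uA_locally_holder_general
    (M : ℕ → ℕ → Bool) (lam H : ℝ)
    (hlam₀ : 0 < lam) (hlam₁ : lam < 1)
    (A : ShiftSpace M → ℝ)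
    (hhold : LocHolder M lam H A) :
    LocHolder M lam (H / (1 - lam)) (uA M A) := by
  intro k hk x y hxy
  have hH : 0 ≤ H := hhold.nonneg hlam₀ x
  have hc : 0 ≤ H / (1 - lam) * lam ^ k :=
    mul_nonneg (div_nonneg hH (by linarith)) (pow_nonneg hlam₀.le k)
  exact Real.sSup_sub_sSup_le_of_forall_exists_le_add ⟨0, zero_mem_uASet M A x⟩ hc
    (hhold.exists_uASet_le_add hlam₀ hlam₁ hH hk hxy)
    (hhold.exists_uASet_le_add hlam₀ hlam₁ hH hk hxy.symm)

/-- the function `u_A(x) = sup {S_k(A - β_A)(y) : k ≥ 0, σ^k(y) = x}` is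
locally Hölder continuous with `Var_k(u_A) ≤ (H_A/(1-λ)) λ^k` for all `k ≥ 1`. -/
theorem uA_locally_holder
    (M : ℕ → ℕ → Bool) (F : Set ℕ) (K₀ : ℕ) (lam H : ℝ)
    (hlam₀ : 0 < lam) (hlam₁ : lam < 1) (hH : 0 < H)
    (hprim : Primitive M F K₀)
    (A : ShiftSpace M → ℝ)
    (hbdd : BddAbove (Set.range A))
    (hbelow : BddBelow (A '' FCyl M F))
    (hhold : LocHolder M lam H A) :
    LocHolder M lam (H / (1 - lam)) (uA M A) :=
  uA_locally_holder_general M lam H hlam₀ hlam₁ A hhold
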